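/- arXiv:2411.06910 — 6 statements merged into one kernel-verified Lean document; each statement's English description precedes it below -/
import Mathlib

section
/- Let H be a real Hilbert space and let f : H → ℝ be quasiconvex, lower semicontinuous, and bounded below. Then for every x ∈ H and every β > 0 the proximal set Prox_{βf}(x) is nonempty, i.e., the function y ↦ f(y) + (1/(2β))‖y − x‖² attains its minimum over H at some point. -/
/-!
The sublevel sets of a quasiconvex lower semicontinuous function are closed and convex. Along a
minimizing sequence `yₙ` of `y ↦ f y + c ‖y - x‖²` we may assume `f yₙ → τ` and `‖yₙ - x‖ → δ`,
so that `τ + c δ²` is the infimum. The sets `{f ≤ τ + ε} ∩ closedBall x (δ + ε)` are nonempty,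
closed, convex and bounded, and decrease as `ε ↓ 0`. In a Hilbert space such a nested family has
nonempty intersection: by the Pythagorean inequality for nearest points of convex sets, the
nearest points to a fixed point form a Cauchy sequence. Any point of the intersection is a
minimizer.
-/

open Filter Topology Set Metric

section Hilbert

variable {H : Type*} [NormedAddCommGroup H] [InnerProductSpace ℝ H] [CompleteSpace H]

theorem exists_mem_forall_norm_sub_sq_add_le {K : Set H} (hne : K.Nonempty) (hcl : IsClosed K)
    (hconv : Convex ℝ K) (x : H) :
    ∃ p ∈ K, ∀ q ∈ K, ‖q - p‖ ^ 2 + ‖x - p‖ ^ 2 ≤ ‖x - q‖ ^ 2 := by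
  obtain ⟨p, hp, hmin⟩ := exists_norm_eq_iInf_of_complete_convex hne hcl.isComplete hconv x
  refine ⟨p, hp, fun q hq => ?_⟩
  have hinner := (norm_eq_iInf_iff_real_inner_le_zero hconv hp).1 hmin q hq
  have hexpand := norm_sub_sq_real (x - p) (q - p)
  rw [sub_sub_sub_cancel_right] at hexpand
  linarith

theorem nonempty_iInter_of_antitone_of_isClosed_of_convex {K : ℕ → Set H} (hanti : Antitone K)
    (hne : ∀ n, (K n).Nonempty) (hcl : ∀ n, IsClosed (K n)) (hconv : ∀ n, Convex ℝ (K n))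
    (hbdd : Bornology.IsBounded (K 0)) :
    (⋂ n, K n).Nonempty := by
  choose p hpK hp using fun n => exists_mem_forall_norm_sub_sq_add_le (hne n) (hcl n) (hconv n) 0
  simp only [zero_sub, norm_neg] at hp
  have hstep : ∀ N n, N ≤ n → ‖p n - p N‖ ^ 2 + ‖p N‖ ^ 2 ≤ ‖p n‖ ^ 2 :=
    fun N n hNn => hp N (p n) (hanti hNn (hpK n))
  have hmono : Monotone fun n => ‖p n‖ ^ 2 := fun N n hNn => by
    linarith [hstep N n hNn, sq_nonneg ‖p n - p N‖]
  obtain ⟨R, hR⟩ := hbdd.exists_norm_le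
  have hbddAbove : BddAbove (range fun n => ‖p n‖ ^ 2) := by
    refine ⟨R ^ 2, forall_mem_range.2 fun n => ?_⟩
    exact pow_le_pow_left₀ (norm_nonneg _) (hR _ (hanti (Nat.zero_le n) (hpK n))) 2
  set A := ⨆ n, ‖p n‖ ^ 2
  have hA : ∀ n, ‖p n‖ ^ 2 ≤ A := fun n => le_ciSup hbddAbove n
  have hcauchy : CauchySeq p := by
    refine Metric.cauchySeq_iff'.2 fun ε hε => ?_
    obtain ⟨N, hN⟩ := ((tendsto_atTop_ciSup hmono hbddAbove).eventually
      (lt_mem_nhds (show A - ε ^ 2 < A by linarith [pow_pos hε 2]))).exists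
    refine ⟨N, fun n hNn => ?_⟩
    rw [dist_eq_norm]
    refine lt_of_pow_lt_pow_left₀ 2 hε.le ?_
    linarith [hstep N n hNn, hA n]
  obtain ⟨P, hP⟩ := cauchySeq_tendsto_of_complete hcauchy
  exact ⟨P, mem_iInter.2 fun n => (hcl n).mem_of_tendsto hP
    (eventually_atTop.2 ⟨n, fun k hk => hanti hk (hpK k)⟩)⟩

theorem QuasiconvexOn.exists_le_of_tendsto {f : H → ℝ} (hf : QuasiconvexOn ℝ univ f)
    (hlsc : LowerSemicontinuous f) {y : ℕ → H} {x : H} {τ δ : ℝ}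
    (hfy : Tendsto (fun n => f (y n)) atTop (𝓝 τ))
    (hdy : Tendsto (fun n => ‖y n - x‖) atTop (𝓝 δ)) :
    ∃ z, f z ≤ τ ∧ ‖z - x‖ ≤ δ := by
  set ε : ℕ → ℝ := fun k => 1 / (k + 1)
  have hε : ∀ k, 0 < ε k := fun k => Nat.one_div_pos_of_nat
  set K : ℕ → Set H := fun k => {z | f z ≤ τ + ε k} ∩ closedBall x (δ + ε k)
  have hanti : Antitone K := fun k l hkl =>
    have : ε l ≤ ε k := Nat.one_div_le_one_div hkl
    inter_subset_inter (fun z (hz : f z ≤ τ + ε l) => hz.trans (by linarith))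
      (closedBall_subset_closedBall (by linarith))
  have hne : ∀ k, (K k).Nonempty := fun k => by
    obtain ⟨n, hfn, hdn⟩ := ((hfy.eventually (gt_mem_nhds (lt_add_of_pos_right τ (hε k)))).and
      (hdy.eventually (gt_mem_nhds (lt_add_of_pos_right δ (hε k))))).exists
    exact ⟨y n, hfn.le, mem_closedBall_iff_norm.2 hdn.le⟩
  have hconv : ∀ k, Convex ℝ (K k) := fun k =>
    (by simpa using hf (τ + ε k) : Convex ℝ {z | f z ≤ τ + ε k}).inter (convex_closedBall _ _)
  obtain ⟨z, hz⟩ := nonempty_iInter_of_antitone_of_isClosed_of_convex hanti hne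
    (fun k => (hlsc.isClosed_preimage _).inter isClosed_closedBall) hconv
    (isBounded_closedBall.subset inter_subset_right)
  have hzK : ∀ k, f z ≤ τ + ε k ∧ ‖z - x‖ ≤ δ + ε k := fun k =>
    ⟨(mem_iInter.1 hz k).1, mem_closedBall_iff_norm.1 (mem_iInter.1 hz k).2⟩
  have hlim : Tendsto ε atTop (𝓝 0) := tendsto_one_div_add_atTop_nhds_zero_nat
  refine ⟨z, ?_, ?_⟩
  · exact ge_of_tendsto' (by simpa using hlim.const_add τ) fun k => (hzK k).1
  · exact ge_of_tendsto' (by simpa using hlim.const_add δ) fun k => (hzK k).2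

end Hilbert

theorem exists_subseq_tendsto_of_add_mul_sq_le {a b : ℕ → ℝ} {m c S : ℝ} (hc : 0 < c)
    (ha : ∀ n, m ≤ a n) (hb : ∀ n, 0 ≤ b n) (hS : ∀ n, a n + c * b n ^ 2 ≤ S) :
    ∃ φ : ℕ → ℕ, ∃ τ δ : ℝ, StrictMono φ ∧ Tendsto (a ∘ φ) atTop (𝓝 τ) ∧
      Tendsto (b ∘ φ) atTop (𝓝 δ) := by
  have hbox : ∀ n, (a n, b n) ∈ Icc m S ×ˢ Icc 0 (1 + (S - m) / c) := fun n => by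
    have hbsq : b n ^ 2 ≤ (S - m) / c := by
      rw [le_div_iff₀ hc]
      linarith [ha n, hS n]
    exact ⟨⟨ha n, by nlinarith [hS n, hb n]⟩, hb n, by nlinarith [sq_nonneg (b n - 1)]⟩
  obtain ⟨⟨τ, δ⟩, -, φ, hφ, hlim⟩ := (isCompact_Icc.prod isCompact_Icc).tendsto_subseq hbox
  exact ⟨φ, τ, δ, hφ, hlim.fst_nhds, hlim.snd_nhds⟩

/-- For a quasiconvex, lower semicontinuous function `f` bounded
below on a real Hilbert space, the proximal set `Prox_{βf}(x)` is nonempty for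
every `x` and every `β > 0`. -/
theorem prox_nonempty_of_quasiconvex_lsc_bddBelow
    {H : Type*} [NormedAddCommGroup H] [InnerProductSpace ℝ H] [CompleteSpace H]
    (f : H → ℝ)
    (hq : ∀ x y : H, ∀ t ∈ Set.Icc (0 : ℝ) 1,
      f ((1 - t) • x + t • y) ≤ max (f x) (f y))
    (hlsc : LowerSemicontinuous f)
    (m : ℝ) (hbdd : ∀ y : H, m ≤ f y)
    (x : H) (β : ℝ) (hβ : 0 < β) :
    ∃ z : H, ∀ y : H,
      f z + (1 / (2 * β)) * ‖z - x‖ ^ 2 ≤ f y + (1 / (2 * β)) * ‖y - x‖ ^ 2 := by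
  set c : ℝ := 1 / (2 * β)
  have hc : 0 < c := by positivity
  set g : H → ℝ := fun y => f y + c * ‖y - x‖ ^ 2
  have hgm : BddBelow (range g) :=
    ⟨m, forall_mem_range.2 fun y => le_add_of_le_of_nonneg (hbdd y) (by positivity)⟩
  have hf : QuasiconvexOn ℝ univ f := quasiconvexOn_iff_le_max.2
    ⟨convex_univ, fun u _ v _ a b ha hb hab => by
      simpa [← eq_sub_of_add_eq hab] using hq u v b ⟨hb, by linarith⟩⟩
  obtain ⟨u, hu_anti, hu_lim, hu_mem⟩ := exists_seq_tendsto_sInf (range_nonempty g) hgm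
  choose y hy using hu_mem
  obtain ⟨φ, τ, δ, hφ, hfy, hdy⟩ := exists_subseq_tendsto_of_add_mul_sq_le hc
    (fun n => hbdd (y n)) (fun n => norm_nonneg (y n - x))
    (fun n => (hy n).trans_le (hu_anti (Nat.zero_le n)))
  have hτδ : τ + c * δ ^ 2 = sInf (range g) :=
    tendsto_nhds_unique (hfy.add ((hdy.pow 2).const_mul c))
      (by simpa only [Function.comp_def, ← hy] using hu_lim.comp hφ.tendsto_atTop)
  obtain ⟨z, hfz, hdz⟩ := hf.exists_le_of_tendsto hlsc (y := y ∘ φ) hfy hdy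
  refine ⟨z, fun w => ?_⟩
  calc g z ≤ τ + c * δ ^ 2 := add_le_add hfz (by gcongr)
    _ = sInf (range g) := hτδ
    _ ≤ g w := csInf_le hgm (mem_range_self w)
end

section
/- Let H be a real Hilbert space, f : H → ℝ strongly quasiconvex with value γ > 0, β > 0, and x ∈ H. If x̄ ∈ Prox_{βf}(x), then for all y ∈ H and all λ ∈ [0,1]: f(x̄) ≤ max{f(y), f(x̄)} + (λ/2)(λ/β − γ + λγ)‖y − x̄‖² + (λ/β)⟨x̄ − x, y − x̄⟩. -/
open RealInnerProductSpace

/-- Key inequality for proximal points of a strongly quasiconvex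
function. -/
theorem prox_point_key_inequality
    {H : Type*} [NormedAddCommGroup H] [InnerProductSpace ℝ H] [CompleteSpace H]
    (f : H → ℝ) (γ : ℝ) (hγ : 0 < γ)
    (hf : ∀ x y : H, ∀ t ∈ Set.Icc (0 : ℝ) 1,
      f ((1 - t) • x + t • y) ≤ max (f x) (f y) - t * (1 - t) * (γ / 2) * ‖x - y‖ ^ 2)
    (β : ℝ) (hβ : 0 < β) (x xb : H)
    (hprox : ∀ z : H,
      f xb + (1 / (2 * β)) * ‖xb - x‖ ^ 2 ≤ f z + (1 / (2 * β)) * ‖z - x‖ ^ 2) :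
    ∀ y : H, ∀ t ∈ Set.Icc (0 : ℝ) 1,
      f xb ≤ max (f y) (f xb) + (t / 2) * (t / β - γ + t * γ) * ‖y - xb‖ ^ 2
        + (t / β) * ⟪xb - x, y - xb⟫ := by
  intro y t ht
  obtain ⟨ht0, ht1⟩ := ht
  have hz := hprox ((1 - t) • xb + t • y)
  have hfz := hf xb y t ⟨ht0, ht1⟩
  have h1 : ((1 - t) • xb + t • y) - x = (xb - x) + t • (y - xb) := by module
  have hnorm : ‖((1 - t) • xb + t • y) - x‖ ^ 2
      = ‖xb - x‖ ^ 2 + 2 * (t * ⟪xb - x, y - xb⟫) + t ^ 2 * ‖y - xb‖ ^ 2 := by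
    rw [h1, norm_add_sq_real, real_inner_smul_right, norm_smul, Real.norm_eq_abs,
      mul_pow, sq_abs]
  have hrev : ‖xb - y‖ = ‖y - xb‖ := norm_sub_rev _ _
  rw [hnorm] at hz
  rw [hrev] at hfz
  have hb : (1 / (2 * β)) * (‖xb - x‖ ^ 2 + 2 * (t * ⟪xb - x, y - xb⟫)
        + t ^ 2 * ‖y - xb‖ ^ 2)
      = (1 / (2 * β)) * ‖xb - x‖ ^ 2 + (t / β) * ⟪xb - x, y - xb⟫
        + t ^ 2 / (2 * β) * ‖y - xb‖ ^ 2 := by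
    field_simp
  have hc : (t / 2) * (t / β - γ + t * γ) * ‖y - xb‖ ^ 2
      = - (t * (1 - t) * (γ / 2) * ‖y - xb‖ ^ 2) + t ^ 2 / (2 * β) * ‖y - xb‖ ^ 2 := by
    field_simp
    ring
  rw [max_comm] at hfz
  linarith [hz, hfz]
end

section
/- Let H be a real Hilbert space, f : H → ℝ strongly quasiconvex with value γ > 0, and β > 0. Then for every x̄ ∈ H: x̄ ∈ Prox_{βf}(x̄) if and only if x̄ is a minimizer of f over H. In other words, the fixed points of the proximal map of f with parameter β coincide exactly with the minimizers of f. -/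
/-- For a strongly quasiconvex function, the fixed points of the
proximal map coincide exactly with the minimizers. -/
theorem prox_fixed_point_iff_minimizer
    {H : Type*} [NormedAddCommGroup H] [InnerProductSpace ℝ H] [CompleteSpace H]
    (f : H → ℝ) (γ : ℝ) (hγ : 0 < γ)
    (hf : ∀ x y : H, ∀ t ∈ Set.Icc (0 : ℝ) 1,
      f ((1 - t) • x + t • y) ≤ max (f x) (f y) - t * (1 - t) * (γ / 2) * ‖x - y‖ ^ 2)
    (β : ℝ) (hβ : 0 < β) (xb : H) :
    (∀ y : H, f xb + (1 / (2 * β)) * ‖xb - xb‖ ^ 2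
        ≤ f y + (1 / (2 * β)) * ‖y - xb‖ ^ 2)
      ↔ (∀ y : H, f xb ≤ f y) := by
  have hβ2 : (0:ℝ) < 2 * β := by linarith
  constructor
  · intro h y
    by_contra hlt
    push_neg at hlt
    have hne : y ≠ xb := by
      intro he; rw [he] at hlt; exact lt_irrefl _ hlt
    set d : ℝ := ‖xb - y‖ with hd
    have hdpos : 0 < d := by
      rw [hd, norm_pos_iff, sub_ne_zero]
      exact fun he => hne he.symm
    set c : ℝ := γ * β with hc
    have hcpos : 0 < c := mul_pos hγ hβ
    set t : ℝ := c / (2 + c) with ht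
    have h2c : (0:ℝ) < 2 + c := by linarith
    have ht0 : 0 < t := div_pos hcpos h2c
    have ht1 : t < 1 := by
      rw [ht, div_lt_one h2c]; linarith
    have hteq : t * (2 + c) = c := div_mul_cancel₀ c (ne_of_gt h2c)
    have h1 := hf xb y t ⟨ht0.le, ht1.le⟩
    have h2 := h ((1 - t) • xb + t • y)
    have hzx : (1 - t) • xb + t • y - xb = t • (y - xb) := by
      rw [smul_sub]; module
    have hnz : ‖(1 - t) • xb + t • y - xb‖ = t * d := by
      rw [hzx, norm_smul, Real.norm_eq_abs, abs_of_pos ht0, hd, norm_sub_rev]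
    rw [hnz, sub_self, norm_zero] at h2
    rw [max_eq_left hlt.le] at h1
    have hfz : f xb ≤ f ((1 - t) • xb + t • y) + 1 / (2 * β) * (t * d) ^ 2 := by
      nlinarith
    have hkey : f xb ≤ f xb - t * (1 - t) * (γ / 2) * d ^ 2 + 1 / (2 * β) * (t * d) ^ 2 :=
      le_trans hfz (by nlinarith)
    -- derive contradiction: coefficient is negative
    have hco : 1 / (2 * β) * t ^ 2 < t * (1 - t) * (γ / 2) := by
      rw [div_mul_eq_mul_div, one_mul, div_lt_iff₀ hβ2]
      have e2 : (1 - t) * (2 + c) = 2 := by nlinarith [hteq]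
      nlinarith [hteq, e2, mul_pos hcpos hcpos, mul_pos h2c h2c, hc]
    nlinarith [mul_pos hdpos hdpos, sq_nonneg d]
  · intro h y
    have h0 : ‖xb - xb‖ = 0 := by simp
    rw [h0]
    have : 0 ≤ 1 / (2 * β) * ‖y - xb‖ ^ 2 := by positivity
    nlinarith [h y]
end

section
/- Let H be a real Hilbert space, f : H → ℝ strongly quasiconvex with value γ > 0 with minimizer x*, let c > 0 and (c_k) a sequence of reals with c_k ≥ c for all k, and let (x^k) be a sequence in H with x^{k+1} ∈ Prox_{c_k f}(x^k) for all k ∈ ℕ. Then for every k ∈ ℕ: ‖x^{k+1} − x*‖² ≤ ‖x^k − x*‖² − ‖x^k − x^{k+1}‖². -/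
/-! A proximal point `p` of `z` is, by its defining inequality, a point of the sublevel set
`{y | f y ≤ f p}` nearest to `z`. For quasiconvex `f` this set is convex, so the variational
inequality of the projection onto it gives `⟪z - p, m - p⟫ ≤ 0` for each of its points `m`, in
particular for a minimizer of `f`; the three-point identity turns this into the Fejér inequality. -/

open Set

section

variable {H : Type*} [NormedAddCommGroup H]

/-- `p` is a point of `Prox_{βf}(z)`. -/
def IsProxPoint (β : ℝ) (f : H → ℝ) (z p : H) : Prop :=
  ∀ y : H, f p + (1 / (2 * β)) * ‖p - z‖ ^ 2 ≤ f y + (1 / (2 * β)) * ‖y - z‖ ^ 2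

theorem IsProxPoint.norm_sub_le_of_le {β : ℝ} {f : H → ℝ} {z p : H} (hβ : 0 < β)
    (hp : IsProxPoint β f z p) {y : H} (hy : f y ≤ f p) : ‖z - p‖ ≤ ‖z - y‖ := by
  have hsq : ‖p - z‖ ^ 2 ≤ ‖y - z‖ ^ 2 := by
    have := hp y
    have : 0 < 1 / (2 * β) := by positivity
    nlinarith
  rw [norm_sub_rev z p, norm_sub_rev z y]
  exact (sq_le_sq₀ (norm_nonneg _) (norm_nonneg _)).mp hsq

section NormedSpace

variable [NormedSpace ℝ H]

def StronglyQuasiconvexWith (γ : ℝ) (f : H → ℝ) : Prop :=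
  ∀ x y : H, ∀ t ∈ Icc (0 : ℝ) 1,
    f ((1 - t) • x + t • y) ≤ max (f x) (f y) - t * (1 - t) * (γ / 2) * ‖x - y‖ ^ 2

theorem StronglyQuasiconvexWith.quasiconvexOn {γ : ℝ} {f : H → ℝ} (hγ : 0 ≤ γ)
    (hf : StronglyQuasiconvexWith γ f) : QuasiconvexOn ℝ univ f := by
  refine quasiconvexOn_iff_le_max.mpr ⟨convex_univ, fun x _ y _ a b _ hb hab => ?_⟩
  obtain rfl : a = 1 - b := by linarith
  have hb1 : b ≤ 1 := by linarith
  have h := hf x y b ⟨hb, hb1⟩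
  have : 0 ≤ b * (1 - b) * (γ / 2) * ‖x - y‖ ^ 2 := by
    have : 0 ≤ 1 - b := by linarith
    positivity
  linarith

end NormedSpace

variable [InnerProductSpace ℝ H]

theorem real_inner_sub_sub_nonpos_of_forall_norm_le {K : Set H} (hK : Convex ℝ K) {u v : H}
    (hv : v ∈ K) (hmin : ∀ w ∈ K, ‖u - v‖ ≤ ‖u - w‖) {w : H} (hw : w ∈ K) :
    inner ℝ (u - v) (w - v) ≤ 0 := by
  have : Nonempty K := ⟨⟨v, hv⟩⟩
  have hinf : ‖u - v‖ = ⨅ w : K, ‖u - w‖ :=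
    le_antisymm (le_ciInf fun w => hmin w w.2)
      (ciInf_le ⟨0, Set.forall_mem_range.mpr fun _ => norm_nonneg _⟩ (⟨v, hv⟩ : K))
  exact (norm_eq_iInf_iff_real_inner_le_zero hK hv).mp hinf w hw

theorem IsProxPoint.norm_sub_sq_le {β : ℝ} {f : H → ℝ} {z p m : H}
    (hf : QuasiconvexOn ℝ univ f) (hβ : 0 < β) (hp : IsProxPoint β f z p) (hm : f m ≤ f p) :
    ‖p - m‖ ^ 2 ≤ ‖z - m‖ ^ 2 - ‖z - p‖ ^ 2 := by
  have hinner : inner ℝ (z - p) (m - p) ≤ 0 :=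
    real_inner_sub_sub_nonpos_of_forall_norm_le (hf (f p)) ⟨mem_univ p, le_rfl⟩
      (fun _ hy => hp.norm_sub_le_of_le hβ hy.2) ⟨mem_univ m, hm⟩
  have hsplit : ‖z - m‖ ^ 2 = ‖z - p‖ ^ 2 - 2 * inner ℝ (z - p) (m - p) + ‖m - p‖ ^ 2 := by
    rw [← norm_sub_sq_real, sub_sub_sub_cancel_right]
  rw [hsplit, norm_sub_rev p m]
  linarith

end

theorem ppa_fejer_inequality_general
    {H : Type*} [NormedAddCommGroup H] [InnerProductSpace ℝ H]
    (f : H → ℝ) (γ : ℝ) (hγ : 0 < γ)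
    (hf : ∀ x y : H, ∀ t ∈ Set.Icc (0 : ℝ) 1,
      f ((1 - t) • x + t • y) ≤ max (f x) (f y) - t * (1 - t) * (γ / 2) * ‖x - y‖ ^ 2)
    (xs : H) (hxs : ∀ y : H, f xs ≤ f y)
    (c : ℝ) (hc : 0 < c) (ck : ℕ → ℝ) (hck : ∀ k, c ≤ ck k)
    (x : ℕ → H)
    (hx : ∀ k : ℕ, ∀ y : H,
      f (x (k + 1)) + (1 / (2 * ck k)) * ‖x (k + 1) - x k‖ ^ 2
        ≤ f y + (1 / (2 * ck k)) * ‖y - x k‖ ^ 2) :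
    ∀ k : ℕ, ‖x (k + 1) - xs‖ ^ 2 ≤ ‖x k - xs‖ ^ 2 - ‖x k - x (k + 1)‖ ^ 2 := fun k =>
  IsProxPoint.norm_sub_sq_le (StronglyQuasiconvexWith.quasiconvexOn hγ.le hf)
    (hc.trans_le (hck k)) (hx k) (hxs _)

/-- Fejér-type recursive inequality for the proximal point
algorithm applied to a strongly quasiconvex function. -/
theorem ppa_fejer_inequality
    {H : Type*} [NormedAddCommGroup H] [InnerProductSpace ℝ H] [CompleteSpace H]
    (f : H → ℝ) (γ : ℝ) (hγ : 0 < γ)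
    (hf : ∀ x y : H, ∀ t ∈ Set.Icc (0 : ℝ) 1,
      f ((1 - t) • x + t • y) ≤ max (f x) (f y) - t * (1 - t) * (γ / 2) * ‖x - y‖ ^ 2)
    (xs : H) (hxs : ∀ y : H, f xs ≤ f y)
    (c : ℝ) (hc : 0 < c) (ck : ℕ → ℝ) (hck : ∀ k, c ≤ ck k)
    (x : ℕ → H)
    (hx : ∀ k : ℕ, ∀ y : H,
      f (x (k + 1)) + (1 / (2 * ck k)) * ‖x (k + 1) - x k‖ ^ 2
        ≤ f y + (1 / (2 * ck k)) * ‖y - x k‖ ^ 2) :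
    ∀ k : ℕ, ‖x (k + 1) - xs‖ ^ 2 ≤ ‖x k - xs‖ ^ 2 - ‖x k - x (k + 1)‖ ^ 2 :=
  ppa_fejer_inequality_general f γ hγ hf xs hxs c hc ck hck x hx
end

section
/- Let H be a real Hilbert space, f : H → ℝ strongly quasiconvex with value γ > 0 with minimizer x*, let c > 0 and (c_k) a sequence of reals with c_k ≥ c for all k, and let (x^k) be a sequence in H with x^{k+1} ∈ Prox_{c_k f}(x^k) for all k ∈ ℕ. Let b ≥ ‖x^0 − x*‖², set λ₀ = (1/2)·γc/(1 + γc), and define φ(ε) = ⌈4b/(ε²((1−λ₀)γc − λ₀)²)⌉ + 1 for ε > 0. Then for every ε > 0 and every k ≥ φ(ε): ‖x^k − x*‖ < ε. -/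
open scoped RealInnerProductSpace

private lemma pow_lower_bound_aux {δ : ℝ} (hδ : 0 ≤ δ) :
    ∀ n : ℕ, 1 + (n : ℝ) * δ + ((n : ℝ) * ((n : ℝ) - 1) / 2) * δ ^ 2 ≤ (1 + δ) ^ n := by
  intro n
  induction n with
  | zero => norm_num
  | succ n ih =>
    have hn : (0:ℝ) ≤ (n:ℝ) := Nat.cast_nonneg n
    have hnn : (0:ℝ) ≤ (n:ℝ) * ((n:ℝ) - 1) := by
      rcases Nat.eq_zero_or_pos n with h | h
      · simp [h]
      · have h1 : (1:ℝ) ≤ (n:ℝ) := by exact_mod_cast h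
        nlinarith
    have step : 1 + ((n:ℝ)+1) * δ + (((n:ℝ)+1) * (((n:ℝ)+1) - 1) / 2) * δ ^ 2
        ≤ (1 + δ) * (1 + (n:ℝ) * δ + ((n:ℝ) * ((n:ℝ) - 1) / 2) * δ ^ 2) := by
      nlinarith [mul_nonneg hnn (mul_nonneg hδ (mul_nonneg hδ hδ))]
    calc 1 + (((n:ℕ)+1 : ℕ) : ℝ) * δ + ((((n:ℕ)+1 : ℕ) : ℝ) * ((((n:ℕ)+1 : ℕ) : ℝ) - 1) / 2) * δ ^ 2
        = 1 + ((n:ℝ)+1) * δ + (((n:ℝ)+1) * (((n:ℝ)+1) - 1) / 2) * δ ^ 2 := by push_cast; ring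
      _ ≤ (1 + δ) * (1 + (n:ℝ) * δ + ((n:ℝ) * ((n:ℝ) - 1) / 2) * δ ^ 2) := step
      _ ≤ (1 + δ) * (1 + δ) ^ n := mul_le_mul_of_nonneg_left ih (by linarith)
      _ = (1 + δ) ^ (n+1) := by ring

/-- Explicit rate of convergence of the proximal point algorithm
iterates towards the minimizer of a strongly quasiconvex function. -/
theorem ppa_rate_of_convergence_iterates
    {H : Type*} [NormedAddCommGroup H] [InnerProductSpace ℝ H] [CompleteSpace H]
    (f : H → ℝ) (γ : ℝ) (hγ : 0 < γ)
    (hf : ∀ x y : H, ∀ t ∈ Set.Icc (0 : ℝ) 1,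
      f ((1 - t) • x + t • y) ≤ max (f x) (f y) - t * (1 - t) * (γ / 2) * ‖x - y‖ ^ 2)
    (xs : H) (hxs : ∀ y : H, f xs ≤ f y)
    (c : ℝ) (hc : 0 < c) (ck : ℕ → ℝ) (hck : ∀ k, c ≤ ck k)
    (x : ℕ → H)
    (hx : ∀ k : ℕ, ∀ y : H,
      f (x (k + 1)) + (1 / (2 * ck k)) * ‖x (k + 1) - x k‖ ^ 2
        ≤ f y + (1 / (2 * ck k)) * ‖y - x k‖ ^ 2)
    (b : ℝ) (hb : ‖x 0 - xs‖ ^ 2 ≤ b)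
    (l0 : ℝ) (hl0 : l0 = (1 / 2) * (γ * c / (1 + γ * c)))
    (φ : ℝ → ℕ)
    (hφ : ∀ ε : ℝ, φ ε = ⌈4 * b / (ε ^ 2 * ((1 - l0) * (γ * c) - l0) ^ 2)⌉₊ + 1) :
    ∀ ε > (0 : ℝ), ∀ k : ℕ, φ ε ≤ k → ‖x k - xs‖ < ε := by
  have hγc : 0 < γ * c := mul_pos hγ hc
  have hγc1 : 0 < 1 + γ * c := by linarith
  -- basic facts about l0
  have hl0pos : 0 < l0 := by
    rw [hl0]; positivity
  have hq1 : γ * c / (1 + γ * c) < 1 := (div_lt_one hγc1).mpr (by linarith)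
  have hq0 : 0 < γ * c / (1 + γ * c) := div_pos hγc hγc1
  have hl0lt : l0 < 1 := by rw [hl0]; linarith
  -- the contraction constant δ = (1 - l0) * (γ c) - l0 equals γ c / 2
  set δ : ℝ := (1 - l0) * (γ * c) - l0 with hδdef
  have hδ : δ = γ * c / 2 := by
    rw [hδdef, hl0]; field_simp; ring
  have hδpos : 0 < δ := by rw [hδ]; positivity
  clear_value δ
  -- key one-step contraction
  have key : ∀ k : ℕ, (1 + δ) * ‖x (k + 1) - xs‖ ^ 2 ≤ ‖x k - xs‖ ^ 2 := by
    intro k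
    have hckpos : 0 < ck k := lt_of_lt_of_le hc (hck k)
    set p := x (k + 1) with hp
    set z := x k with hz
    set a := p - xs with ha
    set d := p - z with hd
    have h1 := hx k ((1 - l0) • p + l0 • xs)
    have h2 := hf p xs l0 ⟨hl0pos.le, hl0lt.le⟩
    rw [max_eq_left (hxs p)] at h2
    have hy : (1 - l0) • p + l0 • xs - z = d - l0 • a := by
      rw [hd, ha]; module
    have hzxs : z - xs = a - d := by rw [ha, hd]; abel
    rw [hy] at h1
    have e1 : ‖d - l0 • a‖ ^ 2 = ‖d‖ ^ 2 - 2 * (l0 * ⟪d, a⟫) + l0 ^ 2 * ‖a‖ ^ 2 := by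
      rw [norm_sub_sq_real, real_inner_smul_right, norm_smul, Real.norm_eq_abs, mul_pow, sq_abs]
    have e2 : ‖a - d‖ ^ 2 = ‖a‖ ^ 2 - 2 * ⟪d, a⟫ + ‖d‖ ^ 2 := by
      rw [norm_sub_sq_real, real_inner_comm]
    have hcomb : l0 * (1 - l0) * (γ / 2) * ‖a‖ ^ 2 + 1 / (2 * ck k) * ‖d‖ ^ 2
        ≤ 1 / (2 * ck k) * ‖d - l0 • a‖ ^ 2 := by linarith
    rw [e1] at hcomb
    have h2c : (0 : ℝ) < 2 * ck k := by linarith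
    have hsimp : ∀ X : ℝ, 1 / (2 * ck k) * X * (2 * ck k) = X := by
      intro X; field_simp
    have hm : l0 * (1 - l0) * (γ / 2) * ‖a‖ ^ 2 * (2 * ck k) + ‖d‖ ^ 2
        ≤ ‖d‖ ^ 2 - 2 * (l0 * ⟪d, a⟫) + l0 ^ 2 * ‖a‖ ^ 2 := by
      have h := mul_le_mul_of_nonneg_right hcomb h2c.le
      rw [add_mul, hsimp, hsimp] at h
      linarith [h]
    have hfac : l0 * ((1 - l0) * γ * ck k * ‖a‖ ^ 2) ≤ l0 * (-(2 * ⟪d, a⟫) + l0 * ‖a‖ ^ 2) := by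
      linarith [hm]
    have hdiv : (1 - l0) * γ * ck k * ‖a‖ ^ 2 ≤ -(2 * ⟪d, a⟫) + l0 * ‖a‖ ^ 2 :=
      le_of_mul_le_mul_left hfac hl0pos
    have hnn : 0 ≤ (1 - l0) * γ * (ck k - c) * ‖a‖ ^ 2 :=
      mul_nonneg (mul_nonneg (mul_nonneg (by linarith : (0:ℝ) ≤ 1 - l0) hγ.le)
        (sub_nonneg.mpr (hck k))) (sq_nonneg ‖a‖)
    rw [hzxs, e2, hδdef]
    nlinarith [hdiv, hnn, sq_nonneg ‖d‖]
  -- iterate the contraction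
  have h1d : (0 : ℝ) < 1 + δ := by linarith
  have hiter : ∀ k : ℕ, (1 + δ) ^ k * ‖x k - xs‖ ^ 2 ≤ b := by
    intro k
    induction k with
    | zero => simpa using hb
    | succ n ih =>
      calc (1 + δ) ^ (n + 1) * ‖x (n + 1) - xs‖ ^ 2
          = (1 + δ) ^ n * ((1 + δ) * ‖x (n + 1) - xs‖ ^ 2) := by ring
        _ ≤ (1 + δ) ^ n * ‖x n - xs‖ ^ 2 :=
            mul_le_mul_of_nonneg_left (key n) (pow_nonneg h1d.le n)
        _ ≤ b := ih
  -- conclude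
  intro ε hε k hk
  have hb0 : 0 ≤ b := le_trans (sq_nonneg _) hb
  have hεδ : (0 : ℝ) < ε ^ 2 * δ ^ 2 := by positivity
  have hkc : 4 * b / (ε ^ 2 * δ ^ 2) ≤ (k : ℝ) - 1 := by
    rw [hφ ε] at hk
    have h2 : ((⌈4 * b / (ε ^ 2 * δ ^ 2)⌉₊ : ℝ) + 1) ≤ (k : ℝ) := by exact_mod_cast hk
    have h3 := Nat.le_ceil (4 * b / (ε ^ 2 * δ ^ 2))
    linarith
  have hpoly : 4 * b ≤ ((k : ℝ) - 1) * (ε ^ 2 * δ ^ 2) := (div_le_iff₀ hεδ).mp hkc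
  have hk1 : (1 : ℝ) ≤ (k : ℝ) := by
    have : 1 ≤ k := le_trans (by rw [hφ ε]; omega) hk
    exact_mod_cast this
  have hpow := pow_lower_bound_aux hδpos.le k
  have hblt : b < ε ^ 2 * (1 + δ) ^ k := by
    have hA := mul_le_mul_of_nonneg_left hpow (sq_nonneg ε)
    have h5 : (0:ℝ) ≤ ((k : ℝ) - 1) ^ 2 * (ε ^ 2 * δ ^ 2) :=
      mul_nonneg (sq_nonneg _) hεδ.le
    have h6 : (0:ℝ) ≤ (k : ℝ) * δ * ε ^ 2 :=
      mul_nonneg (mul_nonneg (Nat.cast_nonneg k) hδpos.le) (sq_nonneg ε)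
    have h7 : (0:ℝ) < ε ^ 2 := by positivity
    linarith [hA, h5, h6, h7, hpoly, hb0]
  have hfin : ‖x k - xs‖ ^ 2 < ε ^ 2 := by
    have hP : (0 : ℝ) < (1 + δ) ^ k := pow_pos h1d k
    have h : (1 + δ) ^ k * ‖x k - xs‖ ^ 2 < (1 + δ) ^ k * ε ^ 2 := by
      calc (1 + δ) ^ k * ‖x k - xs‖ ^ 2 ≤ b := hiter k
        _ < ε ^ 2 * (1 + δ) ^ k := hblt
        _ = (1 + δ) ^ k * ε ^ 2 := by ring
    exact lt_of_mul_lt_mul_left h hP.le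
  exact lt_of_pow_lt_pow_left₀ 2 hε.le hfin
end

section
/- Let H be a real Hilbert space, f : H → ℝ strongly quasiconvex with value γ > 0, β > 0, x, x̄ ∈ H with x̄ ∈ Prox_{βf}(x), and let x* be a minimizer of f. Then for every λ ∈ (0,1]: ⟨x − x̄, x* − x̄⟩ ≤ (β/2)(λ/β − γ + λγ)‖x̄ − x*‖². -/
open RealInnerProductSpace

/-- Quasi-linearization estimate for proximal points of a
strongly quasiconvex function at the minimizer. -/
theorem prox_inner_estimate_at_minimizer
    {H : Type*} [NormedAddCommGroup H] [InnerProductSpace ℝ H] [CompleteSpace H]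
    (f : H → ℝ) (γ : ℝ) (hγ : 0 < γ)
    (hf : ∀ x y : H, ∀ t ∈ Set.Icc (0 : ℝ) 1,
      f ((1 - t) • x + t • y) ≤ max (f x) (f y) - t * (1 - t) * (γ / 2) * ‖x - y‖ ^ 2)
    (β : ℝ) (hβ : 0 < β) (x xb : H)
    (hprox : ∀ z : H,
      f xb + (1 / (2 * β)) * ‖xb - x‖ ^ 2 ≤ f z + (1 / (2 * β)) * ‖z - x‖ ^ 2)
    (xs : H) (hxs : ∀ y : H, f xs ≤ f y) :
    ∀ t ∈ Set.Ioc (0 : ℝ) 1,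
      ⟪x - xb, xs - xb⟫ ≤ (β / 2) * (t / β - γ + t * γ) * ‖xb - xs‖ ^ 2 := by
  intro t ht
  obtain ⟨ht0, ht1⟩ := ht
  have hmem : t ∈ Set.Icc (0 : ℝ) 1 := ⟨le_of_lt ht0, ht1⟩
  have hsc := hf xb xs t hmem
  have hmax : max (f xb) (f xs) = f xb := max_eq_left (hxs xb)
  rw [hmax] at hsc
  have hp := hprox ((1 - t) • xb + t • xs)
  -- norm expansion
  have hz : ((1 - t) • xb + t • xs) - x = (xb - x) + t • (xs - xb) := by
    rw [sub_smul, one_smul, smul_sub]; abel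
  have hn : ‖((1 - t) • xb + t • xs) - x‖ ^ 2
      = ‖xb - x‖ ^ 2 + 2 * (t * ⟪xb - x, xs - xb⟫) + t ^ 2 * ‖xs - xb‖ ^ 2 := by
    rw [hz, @norm_add_sq_real, real_inner_smul_right, norm_smul, Real.norm_eq_abs,
      mul_pow, sq_abs]
  rw [hn] at hp
  have hinner : ⟪x - xb, xs - xb⟫ = -⟪xb - x, xs - xb⟫ := by
    rw [← inner_neg_left]; congr 1; abel
  have hnorm : ‖xb - xs‖ = ‖xs - xb‖ := norm_sub_rev _ _
  rw [hinner, hnorm]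
  have hβ' : (0:ℝ) < 2 * β := by linarith
  have h1 : (1 / (2 * β)) * (2 * (t * ⟪xb - x, xs - xb⟫) + t ^ 2 * ‖xs - xb‖ ^ 2)
      ≥ t * (1 - t) * (γ / 2) * ‖xb - xs‖ ^ 2 := by
    nlinarith [hp, hsc]
  rw [hnorm] at h1
  have hcoef : β / 2 * (t / β - γ + t * γ) = t / 2 - β * γ / 2 + t * β * γ / 2 := by
    field_simp
  rw [hcoef]
  have h2 : 2 * (t * ⟪xb - x, xs - xb⟫) + t ^ 2 * ‖xs - xb‖ ^ 2
      ≥ 2 * β * (t * (1 - t) * (γ / 2) * ‖xs - xb‖ ^ 2) := by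
    have := mul_le_mul_of_nonneg_left h1 (le_of_lt hβ')
    calc 2 * β * (t * (1 - t) * (γ / 2) * ‖xs - xb‖ ^ 2)
        ≤ 2 * β * (1 / (2 * β) * (2 * (t * ⟪xb - x, xs - xb⟫) + t ^ 2 * ‖xs - xb‖ ^ 2)) := this
      _ = 2 * (t * ⟪xb - x, xs - xb⟫) + t ^ 2 * ‖xs - xb‖ ^ 2 := by
          field_simp
  nlinarith [h2, ht0, sq_nonneg ‖xs - xb‖]
end
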